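/- Fix ω ∈ Ω and λ₁ ∈ ℝ, and assume: (a) there exists a nonzero v₁ ∈ ℝ^k such that lim_{n→∞}(1/n) log ‖v₁ A^{(n)}(ω)‖₁ exists and equals λ₁; and (b) for every w ∈ ℝ^k, limsup_{n→∞}(1/n) log ‖w A^{(n)}(ω)‖₁ ≤ λ₁. Then the topological entropy at ω equals λ₁, i.e. lim_{n→∞}(1/n) log |𝓒_n(ω)| exists and equals λ₁. -/

import Mathlib

open MeasureTheory Filter Topology

/-!
An `(n + 1)`-cylinder at `ω` is a path of length `n` through the transition graphs of
`A(ω), …, A(θ^{n-1} ω)`, so `|𝓒_{n+1}(ω)| = ∑ᵢⱼ A^{(n)}(ω)ᵢⱼ = ‖𝟙 A^{(n)}(ω)‖₁`. Hypothesis (b)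
for `w = 𝟙` bounds the exponential growth rate of the cylinder count from above. Since
`A^{(n)}(ω)` has nonnegative entries, `‖v₁ A^{(n)}(ω)‖₁ ≤ ‖v₁‖₁ ‖𝟙 A^{(n)}(ω)‖₁`, so (a) bounds it
from below.
-/

/-- The matrix cocycle: `matIter θ A n ω = A(ω)A(θω)⋯A(θ^{n-1}ω)` (with `matIter θ A 0 ω = 1`). -/
noncomputable def matIter {Ω : Type*} {k : ℕ} (θ : Ω → Ω)
    (A : Ω → Matrix (Fin k) (Fin k) ℝ) : ℕ → Ω → Matrix (Fin k) (Fin k) ℝ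
  | 0, _ => 1
  | n + 1, ω => A ω * matIter θ A n (θ ω)

/-- The ℓ¹ norm of a row vector: `‖v‖₁ = Σᵢ |vᵢ|`. -/
noncomputable def l1norm {k : ℕ} (v : Fin k → ℝ) : ℝ := ∑ i, |v i|

/-- The number of `n`-cylinders. -/
noncomputable def cylCount {Ω : Type*} {k : ℕ} (θ : Ω → Ω)
    (A : Ω → Matrix (Fin k) (Fin k) ℝ) (n : ℕ) (ω : Ω) : ℕ :=
  Set.ncard {x : Fin n → Fin k |
    ∀ (i : ℕ) (hi : i + 1 < n),
      A (θ^[i] ω) (x ⟨i, Nat.lt_of_succ_lt hi⟩) (x ⟨i + 1, hi⟩) = 1}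

theorem Real.log_le_log_add_log_natCast {x C : ℝ} {N : ℕ} (hx : 0 ≤ x) (hC : 1 ≤ C)
    (h : x ≤ C * N) : Real.log x ≤ Real.log C + Real.log N := by
  rcases hx.eq_or_lt with rfl | hx
  · rw [Real.log_zero]
    exact add_nonneg (Real.log_nonneg hC) (Real.log_natCast_nonneg N)
  · have hN : 0 < (N : ℝ) := pos_of_mul_pos_right (hx.trans_le h) (by linarith)
    rw [← Real.log_mul (by positivity) hN.ne']
    exact Real.log_le_log hx h

theorem Filter.tendsto_of_tendsto_of_eventually_le_of_limsup_le {α β : Type*}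
    [ConditionallyCompleteLinearOrder β] [TopologicalSpace β] [OrderTopology β] {f : Filter α}
    {u v : α → β} {b : β} (hu : Tendsto u f (𝓝 b)) (huv : ∀ᶠ a in f, u a ≤ v a)
    (hv : limsup v f ≤ b) (hbdd : IsBoundedUnder (· ≤ ·) f v) : Tendsto v f (𝓝 b) :=
  tendsto_order.2 ⟨fun _ ha => (hu.eventually (eventually_gt_nhds ha)).mp
    (huv.mono fun _ h₁ h₂ => h₂.trans_le h₁),
    fun _ ha => eventually_lt_of_limsup_lt (hv.trans_lt ha) hbdd⟩

theorem tendsto_natCast_succ_inv_mul {x : ℕ → ℝ} {l : ℝ}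
    (h : Tendsto (fun n : ℕ => (n : ℝ)⁻¹ * x n) atTop (𝓝 l)) :
    Tendsto (fun n : ℕ => ((n + 1 : ℕ) : ℝ)⁻¹ * x n) atTop (𝓝 l) := by
  have := (tendsto_natCast_div_add_atTop (1 : ℝ)).mul h
  rw [one_mul] at this
  refine this.congr' ((eventually_ne_atTop 0).mono fun n hn => ?_)
  have : (n : ℝ) ≠ 0 := Nat.cast_ne_zero.2 hn
  push_cast
  field_simp

section MatrixNorm

variable {k : ℕ} {M : Matrix (Fin k) (Fin k) ℝ}

theorem l1norm_one_vecMul (hM : ∀ i j, 0 ≤ M i j) :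
    l1norm (Matrix.vecMul 1 M) = ∑ j, ∑ i, M i j := by
  simp only [l1norm, Matrix.vecMul, dotProduct, Pi.one_apply, one_mul]
  exact Finset.sum_congr rfl fun j _ => abs_of_nonneg (Finset.sum_nonneg fun i _ => hM i j)

theorem l1norm_vecMul_le (hM : ∀ i j, 0 ≤ M i j) (v : Fin k → ℝ) :
    l1norm (Matrix.vecMul v M) ≤ l1norm v * l1norm (Matrix.vecMul 1 M) := by
  rw [l1norm_one_vecMul hM, Finset.mul_sum]
  refine Finset.sum_le_sum fun j _ => ?_
  calc |∑ i, v i * M i j| ≤ ∑ i, |v i| * M i j := by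
        simpa only [abs_mul, abs_of_nonneg (hM _ j)] using
          Finset.abs_sum_le_sum_abs (fun i => v i * M i j) Finset.univ
    _ ≤ ∑ i, l1norm v * M i j :=
        Finset.sum_le_sum fun i _ => mul_le_mul_of_nonneg_right
          (Finset.single_le_sum (f := fun i => |v i|) (fun i _ => abs_nonneg (v i))
            (Finset.mem_univ i)) (hM i j)
    _ = l1norm v * ∑ i, M i j := (Finset.mul_sum ..).symm

end MatrixNorm

section Cocycle

variable {Ω : Type*} {k : ℕ} {θ : Ω → Ω} {A : Ω → Matrix (Fin k) (Fin k) ℝ}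

theorem matIter_nonneg (hA : ∀ ω i j, 0 ≤ A ω i j) (n : ℕ) (ω : Ω) (i j : Fin k) :
    0 ≤ matIter θ A n ω i j := by
  induction n generalizing ω i j with
  | zero => simp only [matIter, Matrix.one_apply]; split_ifs <;> norm_num
  | succ n ih =>
    simp only [matIter, Matrix.mul_apply]
    exact Finset.sum_nonneg fun l _ => mul_nonneg (hA ω i l) (ih (θ ω) l j)

theorem matIter_nonneg_of_zero_or_one (h01 : ∀ ω i j, A ω i j = 0 ∨ A ω i j = 1) (n : ℕ)
    (ω : Ω) (i j : Fin k) : 0 ≤ matIter θ A n ω i j :=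
  matIter_nonneg (fun ω i j => (h01 ω i j).elim Eq.ge fun h => h ▸ zero_le_one) n ω i j

end Cocycle

section Cylinders

variable {Ω : Type*} {k : ℕ} (θ : Ω → Ω) (A : Ω → Matrix (Fin k) (Fin k) ℝ)

def IsAdmissible {n : ℕ} (ω : Ω) (x : Fin n → Fin k) : Prop :=
  ∀ (i : ℕ) (hi : i + 1 < n), A (θ^[i] ω) (x ⟨i, Nat.lt_of_succ_lt hi⟩) (x ⟨i + 1, hi⟩) = 1

theorem cylCount_eq_ncard (n : ℕ) (ω : Ω) :
    cylCount θ A n ω = {x : Fin n → Fin k | IsAdmissible θ A ω x}.ncard := rfl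

variable {θ A}

theorem isAdmissible_cons {n : ℕ} {ω : Ω} {a : Fin k} {y : Fin (n + 1) → Fin k} :
    IsAdmissible θ A ω (Fin.cons a y : Fin (n + 2) → Fin k) ↔
      A ω a (y 0) = 1 ∧ IsAdmissible θ A (θ ω) y := by
  refine ⟨fun h => ⟨?_, fun i hi => ?_⟩, fun ⟨h₀, h⟩ i hi => ?_⟩
  · exact h 0 (by omega)
  · have := h (i + 1) (by omega)
    rwa [Function.iterate_succ_apply] at this
  · cases i with
    | zero => exact h₀
    | succ i =>
      rw [Function.iterate_succ_apply]
      exact h i (by omega)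

theorem isAdmissible_of_length_le_one {n : ℕ} (hn : n ≤ 1) (ω : Ω) (x : Fin n → Fin k) :
    IsAdmissible θ A ω x :=
  fun i hi => absurd hi (by omega)

open Finset

open Classical in
theorem card_isAdmissible_head_succ (n : ℕ) (ω : Ω) (i : Fin k) :
    #{x : Fin (n + 2) → Fin k | x 0 = i ∧ IsAdmissible θ A ω x} =
      #{y : Fin (n + 1) → Fin k | A ω i (y 0) = 1 ∧ IsAdmissible θ A (θ ω) y} := by
  refine (card_nbij' (Fin.cons i) Fin.tail (fun y hy => ?_) (fun x hx => ?_)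
    (fun y _ => Fin.tail_cons _ _) (fun x hx => ?_)).symm
  · simp only [coe_filter, mem_univ, true_and, Set.mem_ofPred_eq] at hy ⊢
    exact ⟨Fin.cons_zero _ _, isAdmissible_cons.2 hy⟩
  · simp only [coe_filter, mem_univ, true_and, Set.mem_ofPred_eq] at hx ⊢
    obtain ⟨hx₀, hx⟩ := hx
    rw [← Fin.cons_self_tail x, hx₀, isAdmissible_cons] at hx
    exact hx
  · simp only [coe_filter, mem_univ, true_and, Set.mem_ofPred_eq] at hx
    rw [← hx.1, Fin.cons_self_tail]

open Classical in
theorem card_isAdmissible_head_succ_eq_sum (h01 : ∀ ω i j, A ω i j = 0 ∨ A ω i j = 1)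
    (n : ℕ) (ω : Ω) (i : Fin k) :
    (#{x : Fin (n + 2) → Fin k | x 0 = i ∧ IsAdmissible θ A ω x} : ℝ) =
      ∑ l, A ω i l * #{y : Fin (n + 1) → Fin k | y 0 = l ∧ IsAdmissible θ A (θ ω) y} := by
  rw [card_isAdmissible_head_succ, card_eq_sum_card_fiberwise (f := fun y => y 0)
    (t := univ) fun _ _ => mem_univ _]
  push_cast
  refine sum_congr rfl fun l _ => ?_
  rw [filter_filter]
  rcases h01 ω i l with h | h
  · rw [h, zero_mul, Nat.cast_eq_zero, card_eq_zero, filter_eq_empty_iff]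
    rintro y - ⟨⟨hy, -⟩, rfl⟩
    simp [h] at hy
  · rw [h, one_mul]
    congr 2
    ext y
    simp only [mem_filter, mem_univ, true_and]
    constructor
    · rintro ⟨⟨-, hy⟩, rfl⟩
      exact ⟨rfl, hy⟩
    · rintro ⟨rfl, hy⟩
      exact ⟨⟨h, hy⟩, rfl⟩

open Classical in
theorem card_isAdmissible_head_eq_sum (h01 : ∀ ω i j, A ω i j = 0 ∨ A ω i j = 1)
    (n : ℕ) (ω : Ω) (i : Fin k) :
    (#{x : Fin (n + 1) → Fin k | x 0 = i ∧ IsAdmissible θ A ω x} : ℝ) =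
      ∑ j, matIter θ A n ω i j := by
  induction n generalizing ω i with
  | zero =>
    have : ({x : Fin 1 → Fin k | x 0 = i ∧ IsAdmissible θ A ω x} : Finset _) = {fun _ => i} := by
      ext x
      simp only [mem_filter, mem_univ, true_and, mem_singleton, funext_iff, Fin.forall_fin_one,
        and_iff_left (isAdmissible_of_length_le_one le_rfl ω x)]
    simp [this, matIter, Matrix.one_apply]
  | succ n ih =>
    simp only [card_isAdmissible_head_succ_eq_sum h01, ih, matIter, Matrix.mul_apply, mul_sum]
    exact sum_comm

open Classical in
theorem cylCount_succ_eq_sum (h01 : ∀ ω i j, A ω i j = 0 ∨ A ω i j = 1) (n : ℕ) (ω : Ω) :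
    (cylCount θ A (n + 1) ω : ℝ) = ∑ i, ∑ j, matIter θ A n ω i j := by
  simp_rw [← card_isAdmissible_head_eq_sum h01, cylCount_eq_ncard, Set.ncard_eq_toFinset_card',
    Set.toFinset_ofPred]
  rw [card_eq_sum_card_fiberwise (f := fun x => x 0) (t := univ) fun _ _ => mem_univ _]
  push_cast
  simp only [filter_filter, and_comm]

theorem cylCount_le_pow (n : ℕ) (ω : Ω) : cylCount θ A n ω ≤ k ^ n := by
  calc cylCount θ A n ω ≤ (Set.univ : Set (Fin n → Fin k)).ncard :=
        Set.ncard_le_ncard (Set.subset_univ _)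
    _ = k ^ n := by simp

theorem l1norm_one_vecMul_matIter (h01 : ∀ ω i j, A ω i j = 0 ∨ A ω i j = 1) (n : ℕ) (ω : Ω) :
    l1norm (Matrix.vecMul 1 (matIter θ A n ω)) = cylCount θ A (n + 1) ω := by
  rw [cylCount_succ_eq_sum h01, l1norm_one_vecMul (matIter_nonneg_of_zero_or_one h01 n ω),
    Finset.sum_comm]

theorem l1norm_vecMul_matIter_le (h01 : ∀ ω i j, A ω i j = 0 ∨ A ω i j = 1)
    (v : Fin k → ℝ) (n : ℕ) (ω : Ω) :
    l1norm (Matrix.vecMul v (matIter θ A n ω)) ≤ l1norm v * cylCount θ A (n + 1) ω := by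
  rw [← l1norm_one_vecMul_matIter h01]
  exact l1norm_vecMul_le (matIter_nonneg_of_zero_or_one h01 n ω) v

end Cylinders

section Entropy

variable {Ω : Type*} {k : ℕ} {θ : Ω → Ω} {A : Ω → Matrix (Fin k) (Fin k) ℝ}

theorem log_cylCount_le (n : ℕ) (ω : Ω) : Real.log (cylCount θ A n ω) ≤ n * Real.log k := by
  have hle : (cylCount θ A n ω : ℝ) ≤ 1 * (k ^ n : ℕ) := by
    rw [one_mul]
    exact Nat.cast_le.2 (cylCount_le_pow n ω)
  have h := Real.log_le_log_add_log_natCast (Nat.cast_nonneg _) le_rfl hle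
  rwa [Real.log_one, zero_add, Nat.cast_pow, Real.log_pow] at h

theorem isBoundedUnder_inv_mul_log_cylCount_succ (ω : Ω) :
    IsBoundedUnder (· ≤ ·) atTop fun n : ℕ => (n : ℝ)⁻¹ * Real.log (cylCount θ A (n + 1) ω) := by
  refine isBoundedUnder_of_eventually_le (a := 2 * Real.log k)
    ((eventually_ge_atTop 1).mono fun n hn => ?_)
  have hn : (1 : ℝ) ≤ n := Nat.one_le_cast.2 hn
  have h := log_cylCount_le (θ := θ) (A := A) (n + 1) ω
  rw [inv_mul_le_iff₀ (by positivity)]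
  push_cast at h
  nlinarith [Real.log_natCast_nonneg k]

theorem tendsto_inv_mul_log_cylCount_succ (h01 : ∀ ω i j, A ω i j = 0 ∨ A ω i j = 1) {ω : Ω}
    {v : Fin k → ℝ} {l : ℝ}
    (hv : Tendsto (fun n : ℕ => (n : ℝ)⁻¹ * Real.log (l1norm (Matrix.vecMul v (matIter θ A n ω))))
      atTop (𝓝 l))
    (hle : limsup (fun n : ℕ => (n : ℝ)⁻¹ * Real.log (cylCount θ A (n + 1) ω)) atTop ≤ l) :
    Tendsto (fun n : ℕ => (n : ℝ)⁻¹ * Real.log (cylCount θ A (n + 1) ω)) atTop (𝓝 l) := by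
  -- `C ≥ 1` makes `log C + log |𝓒| ≥ 0`, which covers the junk value `log 0 = 0`.
  set C := max 1 (l1norm v)
  have hlower : Tendsto (fun n : ℕ => (n : ℝ)⁻¹ *
      (Real.log (l1norm (Matrix.vecMul v (matIter θ A n ω))) - Real.log C)) atTop (𝓝 l) := by
    simpa [mul_sub] using hv.sub
      ((tendsto_inv_atTop_zero.comp tendsto_natCast_atTop_atTop).mul_const (Real.log C))
  refine tendsto_of_tendsto_of_eventually_le_of_limsup_le hlower (.of_forall fun n => ?_) hle
    (isBoundedUnder_inv_mul_log_cylCount_succ ω)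
  have hbound : l1norm (Matrix.vecMul v (matIter θ A n ω)) ≤ C * cylCount θ A (n + 1) ω :=
    (l1norm_vecMul_matIter_le h01 v n ω).trans
      (mul_le_mul_of_nonneg_right (le_max_right 1 _) (Nat.cast_nonneg _))
  have h : Real.log (l1norm (Matrix.vecMul v (matIter θ A n ω))) ≤
      Real.log C + Real.log (cylCount θ A (n + 1) ω) :=
    Real.log_le_log_add_log_natCast (Finset.sum_nonneg fun i _ => abs_nonneg _) (le_max_left _ _)
      hbound
  gcongr
  linarith

end Entropy

theorem entropy_eq_top_lyapunov_exponent_general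
    {Ω : Type*}
    (θ : Ω → Ω)
    (k : ℕ)
    (A : Ω → Matrix (Fin k) (Fin k) ℝ)
    (h01 : ∀ ω i j, A ω i j = 0 ∨ A ω i j = 1)
    (ω : Ω) (lam1 : ℝ)
    (ha : ∃ v₁ : Fin k → ℝ, v₁ ≠ 0 ∧
      Filter.Tendsto
        (fun n : ℕ => (n : ℝ)⁻¹ * Real.log (l1norm (Matrix.vecMul v₁ (matIter θ A n ω))))
        Filter.atTop (𝓝 lam1))
    (hb : ∀ w : Fin k → ℝ,
      Filter.limsup
        (fun n : ℕ => (n : ℝ)⁻¹ * Real.log (l1norm (Matrix.vecMul w (matIter θ A n ω))))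
        Filter.atTop ≤ lam1) :
    Filter.Tendsto
      (fun n : ℕ => (n : ℝ)⁻¹ * Real.log (cylCount θ A n ω))
      Filter.atTop (𝓝 lam1) := by
  obtain ⟨v₁, -, hv₁⟩ := ha
  have hone := hb 1
  simp only [l1norm_one_vecMul_matIter h01] at hone
  rw [← tendsto_add_atTop_iff_nat 1]
  exact tendsto_natCast_succ_inv_mul (tendsto_inv_mul_log_cylCount_succ h01 hv₁ hone)

/-- Fix `ω` and `λ₁ ∈ ℝ` and assume: (a) there is a nonzero `v₁` with
`lim (1/n) log ‖v₁ A^{(n)}(ω)‖₁ = λ₁`, and (b) for every `w`,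
`limsup (1/n) log ‖w A^{(n)}(ω)‖₁ ≤ λ₁`.  Then the topological entropy at `ω` equals `λ₁`:
`lim (1/n) log |𝓒_n(ω)|` exists and equals `λ₁`. -/
theorem entropy_eq_top_lyapunov_exponent
    {Ω : Type*} [MeasurableSpace Ω]
    (ℙ : Measure Ω) [IsProbabilityMeasure ℙ]
    (θ : Ω → Ω) (hθ : MeasurePreserving θ ℙ ℙ) (hθinv : Function.Bijective θ)
    (k : ℕ) (hk : 2 ≤ k)
    (A : Ω → Matrix (Fin k) (Fin k) ℝ)
    (hAmeas : ∀ i j, Measurable fun ω => A ω i j)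
    (h01 : ∀ ω i j, A ω i j = 0 ∨ A ω i j = 1)
    (ω : Ω) (lam1 : ℝ)
    (ha : ∃ v₁ : Fin k → ℝ, v₁ ≠ 0 ∧
      Filter.Tendsto
        (fun n : ℕ => (n : ℝ)⁻¹ * Real.log (l1norm (Matrix.vecMul v₁ (matIter θ A n ω))))
        Filter.atTop (𝓝 lam1))
    (hb : ∀ w : Fin k → ℝ,
      Filter.limsup
        (fun n : ℕ => (n : ℝ)⁻¹ * Real.log (l1norm (Matrix.vecMul w (matIter θ A n ω))))
        Filter.atTop ≤ lam1) :
    Filter.Tendsto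
      (fun n : ℕ => (n : ℝ)⁻¹ * Real.log (cylCount θ A n ω))
      Filter.atTop (𝓝 lam1) :=
  entropy_eq_top_lyapunov_exponent_general θ k A h01 ω lam1 ha hb
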